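/- In the semantics with agent-specific names, the formula D_bf p is not semantically equivalent to any formula of the language Φ that does not use the modality D; that is, for every formula φ built only from the propositional variable p, negation, disjunction, and the modalities @_n and R_n, there exists an epistemic model with agent-specific extension functions in which the truth set of D_bf p differs from the truth set of φ. -/

import Mathlib

/-- Formulas of the language Φ: φ ::= p | ¬φ | φ∨φ | @ₙφ | Rₙφ | Dₙφ,
where `P` is the type of propositional variables and `N` the type of names. -/
inductive Formula (P N : Type) : Type
  | var : P → Formula P N
  | neg : Formula P N → Formula P N
  | disj : Formula P N → Formula P N → Formula P N
  | at_ : N → Formula P N → Formula P N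
  | re : N → Formula P N → Formula P N
  | de : N → Formula P N → Formula P N

/-- An epistemic model with agent-specific extensions. -/
structure ModelA (P N : Type) where
  W : Type
  A : Type
  sim : A → W → W → Prop
  sim_equiv : ∀ a, Equivalence (sim a)
  ext : W → A → N → A
  val : P → Set (W × A)

/-- The satisfaction relation `w, a ⊨ φ` for agent-specific extensions. -/
def ModelA.sat {P N : Type} (M : ModelA P N) : Formula P N → M.W → M.A → Prop
  | .var p, w, a => (w, a) ∈ M.val p
  | .neg φ, w, a => ¬ M.sat φ w a
  | .disj φ ψ, w, a => M.sat φ w a ∨ M.sat ψ w a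
  | .at_ n φ, w, a => M.sat φ w (M.ext w a n)
  | .re n φ, w, a => ∀ u, M.sim a w u → M.sat φ u (M.ext w a n)
  | .de n φ, w, a => ∀ u, M.sim a w u → M.sat φ u (M.ext u a n)

/-- The truth set ⟦φ⟧ of a formula, agent-specific setting. -/
def ModelA.truthSet {P N : Type} (M : ModelA P N) (φ : Formula P N) : Set (M.W × M.A) :=
  {x | M.sat φ x.1 x.2}

/-- A formula does not use the modality D. -/
def Formula.noDe {P N : Type} : Formula P N → Prop
  | .var _ => True
  | .neg φ => φ.noDe
  | .disj φ ψ => φ.noDe ∧ ψ.noDe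
  | .at_ _ φ => φ.noDe
  | .re _ φ => φ.noDe
  | .de _ _ => False



/-!
Truth of D-free formulas is preserved by any relation on world–agent pairs that respects the
valuation, the `@`-successors and (forth and back) the `R`-successors. Take worlds and agents to be
booleans, every world indistinguishable from every other, the extension of every name at `(w, a)`
the agent `w && a`, and `p` false only at `(true, true)`. Then `(w, a) ~ (w', a')` iff
`w && a = w' && a'` is such a relation, so no D-free formula separates `(true, false)` from
`(false, true)`. But `D_bf p` holds at `(w, a)` iff `u && a` is false for every world `u`,
i.e. iff `a = false`, and so it does separate them.
-/

namespace ModelA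

variable {P N : Type}

structure IsNoDeBisimulation (M : ModelA P N) (Z : M.W × M.A → M.W × M.A → Prop) : Prop where
  val_iff : ∀ {x y}, Z x y → ∀ p, (x ∈ M.val p ↔ y ∈ M.val p)
  ext : ∀ {w a w' a'}, Z (w, a) (w', a') → ∀ n, Z (w, M.ext w a n) (w', M.ext w' a' n)
  forth : ∀ {w a w' a'}, Z (w, a) (w', a') → ∀ n u, M.sim a w u →
    ∃ u', M.sim a' w' u' ∧ Z (u, M.ext w a n) (u', M.ext w' a' n)
  back : ∀ {w a w' a'}, Z (w, a) (w', a') → ∀ n u', M.sim a' w' u' →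
    ∃ u, M.sim a w u ∧ Z (u, M.ext w a n) (u', M.ext w' a' n)

theorem IsNoDeBisimulation.sat_iff {M : ModelA P N} {Z : M.W × M.A → M.W × M.A → Prop}
    (hZ : M.IsNoDeBisimulation Z) {φ : Formula P N} (hφ : φ.noDe) {w w' : M.W} {a a' : M.A}
    (hwa : Z (w, a) (w', a')) : M.sat φ w a ↔ M.sat φ w' a' := by
  induction φ generalizing w a w' a' with
  | var p => exact hZ.val_iff hwa p
  | neg ψ ih => exact not_congr (ih hφ hwa)
  | disj ψ χ ihψ ihχ => exact or_congr (ihψ hφ.1 hwa) (ihχ hφ.2 hwa)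
  | at_ n ψ ih => exact ih hφ (hZ.ext hwa n)
  | re n ψ ih =>
    constructor
    · intro hs u' hu'
      obtain ⟨u, hu, hZu⟩ := hZ.back hwa n u' hu'
      exact (ih hφ hZu).mp (hs u hu)
    · intro hs u hu
      obtain ⟨u', hu', hZu⟩ := hZ.forth hwa n u hu
      exact (ih hφ hZu).mpr (hs u' hu')
  | de => exact hφ.elim

end ModelA

def boolModel : ModelA Unit Unit where
  W := Bool
  A := Bool
  sim _ _ _ := True
  sim_equiv _ := ⟨fun _ => trivial, fun _ => trivial, fun _ _ => trivial⟩
  ext w a _ := w && a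
  val _ := {x | (x.1 && x.2) = false}

theorem boolModel_isNoDeBisimulation :
    boolModel.IsNoDeBisimulation fun x y => (x.1 && x.2) = (y.1 && y.2) where
  val_iff {x y} hxy _ := by
    change (x.1 && x.2) = false ↔ (y.1 && y.2) = false
    rw [hxy]
  ext {w a w' a'} hwa _ :=
    (Bool.and_self_left w a).trans (hwa.trans (Bool.and_self_left w' a').symm)
  forth {w a w' a'} hwa _ u _ := ⟨u, trivial, congrArg (u && ·) hwa⟩
  back {w a w' a'} hwa _ u' _ := ⟨u', trivial, congrArg (u' && ·) hwa⟩

theorem boolModel_sat_de_var_iff (w a : Bool) :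
    boolModel.sat (.de () (.var ())) w a ↔ a = false := by
  change (∀ u : Bool, True → (u && (u && a)) = false) ↔ a = false
  cases a <;> simp

/-- In the semantics with agent-specific names, D_bf p is not
semantically equivalent to any formula that does not use the modality D: for
every such formula φ there is an epistemic model with agent-specific extensions
in which ⟦D_bf p⟧ ≠ ⟦φ⟧. -/
theorem de_undefinable_agent_specific (φ : Formula Unit Unit) (h : φ.noDe) :
    ∃ M : ModelA Unit Unit, M.truthSet (.de () (.var ())) ≠ M.truthSet φ := by
  refine ⟨boolModel, fun heq => ?_⟩
  have hφ : boolModel.sat φ true false ↔ boolModel.sat φ false true :=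
    boolModel_isNoDeBisimulation.sat_iff h rfl
  have hde_iff (w a : Bool) : boolModel.sat (.de () (.var ())) w a ↔ boolModel.sat φ w a :=
    Set.ext_iff.mp heq (w, a)
  have hde_true_false := (boolModel_sat_de_var_iff true false).mpr rfl
  have hde_false_true := (boolModel_sat_de_var_iff false true).not.mpr (by decide)
  exact hde_false_true ((hde_iff false true).mpr (hφ.mp ((hde_iff true false).mp hde_true_false)))
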